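/- For every prime p ≥ 11, every unit of Z_p lies in the restricted sumset Q_p +̂ Q_p = {a + b : a, b ∈ Q_p, a ≠ b}; that is, U(p) ⊆ Q_p +̂ Q_p. -/
import Mathlib


def Qp (p : ℕ) : Set (ZMod p) := {x | ∃ u : (ZMod p)ˣ, (u : ZMod p) ^ 2 = x}

def Np (p : ℕ) : Set (ZMod p) := {x | IsUnit x ∧ x ∉ Qp p}

section aux

variable {p : ℕ} [Fact p.Prime]

lemma cast_ne_zero_of {n : ℕ} (h1 : 1 ≤ n) (h2 : n < p) :
    ((n : ℕ) : ZMod p) ≠ 0 := by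
  intro h
  rw [ZMod.natCast_eq_zero_iff] at h
  exact absurd (Nat.le_of_dvd (by omega) h) (by omega)

lemma mem_Qp_of_isSquare {x : ZMod p} (hx : x ≠ 0) (h : IsSquare x) : x ∈ Qp p := by
  obtain ⟨r, hr⟩ := h
  have hr0 : r ≠ 0 := by rintro rfl; exact hx (by simpa using hr)
  have hru : IsUnit r := isUnit_iff_ne_zero.mpr hr0
  exact ⟨hru.unit, by rw [sq, IsUnit.unit_spec]; exact hr.symm⟩

lemma Qp_isSquare {x : ZMod p} (hx : x ∈ Qp p) : IsSquare x := by
  obtain ⟨u, hu⟩ := hx; exact ⟨u, by rw [← hu, sq]⟩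

lemma Qp_isUnit {x : ZMod p} (hx : x ∈ Qp p) : IsUnit x := by
  obtain ⟨u, hu⟩ := hx
  rw [← hu]
  exact u.isUnit.pow 2

lemma Qp_ne_zero {x : ZMod p} (hx : x ∈ Qp p) : x ≠ 0 :=
  (Qp_isUnit hx).ne_zero

lemma Qp_mul {x y : ZMod p} (hx : x ∈ Qp p) (hy : y ∈ Qp p) : x * y ∈ Qp p := by
  obtain ⟨u, hu⟩ := hx; obtain ⟨v, hv⟩ := hy
  exact ⟨u * v, by push_cast; rw [mul_pow, hu, hv]⟩

lemma pow_half_of_not_Qp (hp : 11 ≤ p) {x : ZMod p} (hx : x ≠ 0) (h : x ∉ Qp p) :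
    x ^ (p / 2) = -1 := by
  have hne : x ^ (p / 2) ≠ 1 := by
    intro h1
    exact h (mem_Qp_of_isSquare hx ((ZMod.euler_criterion p hx).mpr h1))
  have hodd : p % 2 = 1 := Nat.odd_iff.mp ((Fact.out : p.Prime).odd_of_ne_two (by omega))
  have hsq : x ^ (p / 2) * x ^ (p / 2) = 1 := by
    rw [← pow_add]
    have : p / 2 + p / 2 = p - 1 := by omega
    rw [this]
    exact ZMod.pow_card_sub_one_eq_one hx
  rcases mul_self_eq_one_iff.mp hsq with h1 | h1
  · exact absurd h1 hne
  · exact h1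

/-- ratio of two nonresidue units is a residue -/
lemma Qp_of_two_not (hp : 11 ≤ p) {u v : ZMod p} (hu : IsUnit u) (hv : IsUnit v)
    (hun : u ∉ Qp p) (hvn : v ∉ Qp p) : u * v⁻¹ ∈ Qp p := by
  have hv0 : v ≠ 0 := hv.ne_zero
  have hx : u * v⁻¹ ≠ 0 := by
    apply mul_ne_zero hu.ne_zero
    exact inv_ne_zero hv0
  apply mem_Qp_of_isSquare hx
  rw [ZMod.euler_criterion p hx]
  rw [mul_pow, inv_pow, pow_half_of_not_Qp hp hu.ne_zero hun,
    pow_half_of_not_Qp hp hv.ne_zero hvn]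
  norm_num

/-- if every unit restricted-sum of residues is a residue, contradiction -/
lemma chain (hp : 11 ≤ p)
    (H : ∀ a ∈ Qp p, ∀ b ∈ Qp p, a ≠ b → a + b ≠ 0 → a + b ∈ Qp p) : False := by
  have hplt : ∀ {m n : ℕ}, 1 ≤ m → m < n → n < p → ((m : ℕ) : ZMod p) ≠ ((n : ℕ) : ZMod p) := by
    intro m n h1 h2 h3 heq
    have : (((n - m : ℕ)) : ZMod p) = 0 := by
      push_cast [Nat.cast_sub h2.le]
      rw [← heq]; ring
    exact cast_ne_zero_of (by omega) (by omega) this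
  have one : (1 : ZMod p) ∈ Qp p := ⟨1, by norm_num⟩
  have four : ((4 : ℕ) : ZMod p) ∈ Qp p := by
    have h2 : ((2 : ℕ) : ZMod p) ≠ 0 := cast_ne_zero_of (by omega) (by omega)
    refine ⟨(isUnit_iff_ne_zero.mpr h2).unit, ?_⟩
    rw [IsUnit.unit_spec]
    push_cast; ring
  have one' : ((1 : ℕ) : ZMod p) ∈ Qp p := by rwa [Nat.cast_one]
  have key : ∀ k : ℕ, 5 ≤ k → k ≤ p - 1 → ((k : ℕ) : ZMod p) ∈ Qp p := by
    intro k hk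
    induction k, hk using Nat.le_induction with
    | base =>
      intro _
      have : ((5 : ℕ) : ZMod p) = ((1 : ℕ) : ZMod p) + ((4 : ℕ) : ZMod p) := by push_cast; ring
      rw [this]
      exact H _ one' _ four (hplt (by omega) (by omega) (by omega))
        (by rw [← this]; exact cast_ne_zero_of (by omega) (by omega))
    | succ k hk ih =>
      intro hk1
      have hkQ := ih (by omega)
      have : ((k + 1 : ℕ) : ZMod p) = ((k : ℕ) : ZMod p) + ((1 : ℕ) : ZMod p) := by push_cast; ring
      rw [this]
      exact H _ hkQ _ one' (fun h => hplt (by omega) (by omega) (by omega) h.symm)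
        (by rw [← this]; exact cast_ne_zero_of (by omega) (by omega))
  have hm1 : (-1 : ZMod p) ∈ Qp p := by
    have : ((p - 1 : ℕ) : ZMod p) = -1 := by
      have : ((p - 1 : ℕ) : ZMod p) = ((p : ℕ) : ZMod p) - 1 := by
        push_cast [Nat.cast_sub (by omega : 1 ≤ p)]; ring
      rw [this, ZMod.natCast_self]; ring
    rw [← this]
    exact key (p - 1) (by omega) le_rfl
  have hm1ne4 : (-1 : ZMod p) ≠ ((4 : ℕ) : ZMod p) := by
    intro h
    have : ((5 : ℕ) : ZMod p) = 0 := by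
      push_cast
      push_cast at h
      linear_combination -h
    exact cast_ne_zero_of (by omega) (by omega) this
  have three : (3 : ZMod p) ∈ Qp p := by
    have h3 : (-1 : ZMod p) + ((4 : ℕ) : ZMod p) = 3 := by push_cast; ring
    rw [← h3]
    exact H _ hm1 _ four hm1ne4
      (by rw [h3]; exact_mod_cast cast_ne_zero_of (n := 3) (by omega) (by omega))
  have two : (2 : ZMod p) ∈ Qp p := by
    have hne : (-1 : ZMod p) ≠ 3 := by
      intro h
      have : ((4 : ℕ) : ZMod p) = 0 := by push_cast; linear_combination -h
      exact cast_ne_zero_of (by omega) (by omega) this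
    have h2 : (-1 : ZMod p) + 3 = 2 := by ring
    rw [← h2]
    exact H _ hm1 _ three hne
      (by rw [h2]; exact_mod_cast cast_ne_zero_of (n := 2) (by omega) (by omega))
  -- every unit is a square: contradiction with exists_nonsquare
  obtain ⟨a, ha⟩ := FiniteField.exists_nonsquare
    (F := ZMod p) (by rw [ZMod.ringChar_zmod_n]; omega)
  have ha0 : a ≠ 0 := by rintro rfl; exact ha ⟨0, by ring⟩
  apply ha
  apply Qp_isSquare
  have hval : ((a.val : ℕ) : ZMod p) = a := ZMod.natCast_rightInverse a
  have hv1 : 1 ≤ a.val := by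
    have := (ZMod.val_eq_zero a).not.mpr ha0
    omega
  have hv2 : a.val < p := ZMod.val_lt a
  rw [← hval]
  rcases Nat.lt_or_ge a.val 5 with h5 | h5
  · interval_cases h : a.val
    · exact one'
    · exact_mod_cast two
    · exact_mod_cast three
    · exact four
  · exact key a.val h5 (by omega)

end aux

theorem stmt_7 (p : ℕ) [Fact p.Prime] (hp : 11 ≤ p) (z : ZMod p) (hz : IsUnit z) :
    ∃ a ∈ Qp p, ∃ b ∈ Qp p, a ≠ b ∧ z = a + b := by
  -- 9, 16, 25 are in Qp
  have h3 : ((3 : ℕ) : ZMod p) ≠ 0 := cast_ne_zero_of (by omega) (by omega)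
  have h4 : ((4 : ℕ) : ZMod p) ≠ 0 := cast_ne_zero_of (by omega) (by omega)
  have h5 : ((5 : ℕ) : ZMod p) ≠ 0 := cast_ne_zero_of (by omega) (by omega)
  have nine : ((9 : ℕ) : ZMod p) ∈ Qp p :=
    ⟨(isUnit_iff_ne_zero.mpr h3).unit, by rw [IsUnit.unit_spec]; push_cast; ring⟩
  have sixteen : ((16 : ℕ) : ZMod p) ∈ Qp p :=
    ⟨(isUnit_iff_ne_zero.mpr h4).unit, by rw [IsUnit.unit_spec]; push_cast; ring⟩
  have tf : ((25 : ℕ) : ZMod p) ∈ Qp p :=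
    ⟨(isUnit_iff_ne_zero.mpr h5).unit, by rw [IsUnit.unit_spec]; push_cast; ring⟩
  have hne : ((16 : ℕ) : ZMod p) ≠ ((9 : ℕ) : ZMod p) := by
    intro h
    have : ((7 : ℕ) : ZMod p) = 0 := by push_cast; push_cast at h; linear_combination h
    exact cast_ne_zero_of (by omega) (by omega) this
  have hsum : ((16 : ℕ) : ZMod p) + ((9 : ℕ) : ZMod p) = ((25 : ℕ) : ZMod p) := by
    push_cast; ring
  -- general transfer: if s = a+b with a,b ∈ Qp distinct, and z/s ∈ Qp, done
  have transfer : ∀ s a b : ZMod p, a ∈ Qp p → b ∈ Qp p → a ≠ b → a + b = s →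
      z * s⁻¹ ∈ Qp p → IsUnit s → ∃ a ∈ Qp p, ∃ b ∈ Qp p, a ≠ b ∧ z = a + b := by
    intro s a b haQ hbQ hab habs hzs hs
    have hc := hzs
    refine ⟨a * (z * s⁻¹), Qp_mul haQ hc, b * (z * s⁻¹), Qp_mul hbQ hc, ?_, ?_⟩
    · intro h
      exact hab (mul_right_cancel₀ (Qp_ne_zero hc) h)
    · have hsne : s ≠ 0 := hs.ne_zero
      have hcalc : a * (z * s⁻¹) + b * (z * s⁻¹) = (a + b) * z * s⁻¹ := by ring
      rw [hcalc, habs, mul_comm s z, mul_assoc, mul_inv_cancel₀ hsne, mul_one]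
  by_cases hzQ : z ∈ Qp p
  · -- z = 16*c + 9*c with c = z/25
    apply transfer _ _ _ sixteen nine hne hsum
    · apply Qp_mul hzQ
      obtain ⟨u, hu⟩ := tf
      exact ⟨u⁻¹, by rw [Units.val_inv_eq_inv_val, inv_pow, hu]⟩
    · exact Qp_isUnit tf
  · -- z is a nonresidue unit; find a residue pair with nonresidue sum
    by_cases H : ∀ a ∈ Qp p, ∀ b ∈ Qp p, a ≠ b → a + b ≠ 0 → a + b ∈ Qp p
    · exact absurd H (fun H => chain hp H)
    · push_neg at H
      obtain ⟨a, haQ, b, hbQ, hab, hs0, hsN⟩ := H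
      have hsu : IsUnit (a + b) := isUnit_iff_ne_zero.mpr hs0
      apply transfer (a + b) a b haQ hbQ hab rfl
      · exact Qp_of_two_not hp hz hsu hzQ hsN
      · exact hsu
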